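/- Existence and uniqueness of K: Let g be a framed Lie algebra over k. There exists exactly one k-linear map K : T(g) → T(g) such that K(1) = 1 and K(x ⊗ u + ∇_x u) = x ⊗ K(u) for all x ∈ g and u ∈ T(g); equivalently, K ∘ L_x = L_x ∘ K − K ∘ ∇_x for all x ∈ g. -/

import Mathlib

/-!
Let `ρ : T(g) → End T(g)` be the algebra map extending `x ↦ L_x + ∇_x` and put `J u = ρ(u) 1`,
so that `J (x ⊗ u) = x ⊗ J u + ∇_x (J u)` and `J 1 = 1`. The conditions on `K` say exactly that
`K ∘ J` fixes `1` and commutes with left multiplication by `g`, i.e. that `K ∘ J = id`. Since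
`∇_x` is a derivation preserving `g`, it preserves the degree filtration, so `J` is the identity
plus a map lowering degree. Hence `J` is bijective and `K = J⁻¹` is the unique solution.
-/

set_option linter.unusedSectionVars false

noncomputable section
open TensorAlgebra

section Leibniz

variable {R A : Type*} [CommRing R] [Ring A] [Algebra R A]

def IsLeibniz (D : Module.End R A) : Prop :=
  ∀ a b, D (a * b) = D a * b + a * D b

namespace IsLeibniz

variable {D D' : Module.End R A}

theorem map_one (hD : IsLeibniz D) : D 1 = 0 := by
  simpa using hD 1 1

theorem map_algebraMap (hD : IsLeibniz D) (r : R) : D (algebraMap R A r) = 0 := by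
  rw [Algebra.algebraMap_eq_smul_one, map_smul, hD.map_one, smul_zero]

theorem add (hD : IsLeibniz D) (hD' : IsLeibniz D') : IsLeibniz (D + D') := fun a b => by
  simp only [LinearMap.add_apply, hD a b, hD' a b, mul_add, add_mul]
  abel

theorem smul (hD : IsLeibniz D) (c : R) : IsLeibniz (c • D) := fun a b => by
  simp only [LinearMap.smul_apply, hD a b, smul_add, smul_mul_assoc, mul_smul_comm]

theorem mem_pow {V : Submodule R A} (hD : IsLeibniz D) (hV : ∀ a ∈ V, D a ∈ V) (n : ℕ)
    {a : A} (ha : a ∈ V ^ n) : D a ∈ V ^ n := by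
  induction ha using Submodule.pow_induction_on_left' with
  | algebraMap r => simp [hD.map_algebraMap]
  | add a b i _ _ ha hb => rw [map_add]; exact add_mem ha hb
  | mem_mul m hm i a ha ih =>
    rw [hD, Nat.succ_eq_add_one, pow_succ']
    exact add_mem (Submodule.mul_mem_mul (hV m hm) ha) (Submodule.mul_mem_mul hm ih)

end IsLeibniz

end Leibniz

theorem LinearMap.bijective_of_sub_self_mem {R M : Type*} [Ring R] [AddCommGroup M] [Module R M]
    (F : ℕ → Submodule R M) (hF : ∀ m, ∃ n, m ∈ F n) (f : M →ₗ[R] M)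
    (h0 : ∀ m ∈ F 0, f m = m) (hs : ∀ n, ∀ m ∈ F (n + 1), f m - m ∈ F n) :
    Function.Bijective f := by
  refine ⟨(injective_iff_map_eq_zero f).2 fun m hm => ?_, fun m => ?_⟩
  · obtain ⟨n, hmn⟩ := hF m
    induction n generalizing m with
    | zero => exact (h0 m hmn).symm.trans hm
    | succ n ih => exact ih m hm (by simpa [hm] using hs n m hmn)
  · obtain ⟨n, hmn⟩ := hF m
    induction n generalizing m with
    | zero => exact ⟨m, h0 m hmn⟩
    | succ n ih =>
      obtain ⟨u, hu⟩ := ih _ (hs n m hmn)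
      exact ⟨m - u, by rw [map_sub, hu, sub_sub_cancel]⟩

namespace TensorAlgebra

variable {R M : Type*} [CommRing R] [AddCommGroup M] [Module R M]

theorem isLeibniz_ext {D D' : Module.End R (TensorAlgebra R M)} (hD : IsLeibniz D)
    (hD' : IsLeibniz D') (h : ∀ m, D (ι R m) = D' (ι R m)) : D = D' := by
  ext u
  induction u using TensorAlgebra.induction with
  | algebraMap r => rw [hD.map_algebraMap, hD'.map_algebraMap]
  | ι m => exact h m
  | mul a b ha hb => rw [hD, hD', ha, hb]
  | add a b ha hb => rw [map_add, map_add, ha, hb]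

theorem isLinearMap_of_isLeibniz {N : M → Module.End R (TensorAlgebra R M)}
    (d : M →ₗ[R] M →ₗ[R] M) (hNd : ∀ x, IsLeibniz (N x))
    (hN : ∀ x y, N x (ι R y) = ι R (d x y)) : IsLinearMap R N where
  map_add x y := isLeibniz_ext (hNd _) ((hNd x).add (hNd y)) fun m => by
    simp only [hN, LinearMap.add_apply, map_add]
  map_smul c x := isLeibniz_ext (hNd _) ((hNd x).smul c) fun m => by
    simp only [hN, LinearMap.smul_apply, map_smul]

theorem map_eq_mul_map_one {f : TensorAlgebra R M →ₗ[R] TensorAlgebra R M}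
    (hf : ∀ x u, f (ι R x * u) = ι R x * f u) (u : TensorAlgebra R M) : f u = u * f 1 := by
  have hmul : ∀ a u, f (a * u) = a * f u := fun a => by
    induction a using TensorAlgebra.induction with
    | algebraMap r => intro u; rw [← Algebra.smul_def, ← Algebra.smul_def, map_smul]
    | ι x => exact hf x
    | mul a b ha hb => intro u; rw [mul_assoc, ha, hb, mul_assoc]
    | add a b ha hb => intro u; rw [add_mul, map_add, ha, hb, add_mul]
  simpa using hmul u 1

-- `V ^ n` is the span of the tensors of degree at most `n`.
local notation "V" => (1 ⊔ LinearMap.range (ι R (M := M)) : Submodule R (TensorAlgebra R M))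

theorem mem_one_sup_range {a : TensorAlgebra R M} :
    a ∈ V ↔ ∃ r x, algebraMap R _ r + ι R x = a := by
  simp only [Submodule.mem_sup, Submodule.mem_one, LinearMap.mem_range]
  grind

theorem monotone_pow_one_sup_range : Monotone (V ^ · : ℕ → Submodule R (TensorAlgebra R M)) :=
  fun _ _ => pow_le_pow_right' le_sup_left

theorem exists_mem_pow (u : TensorAlgebra R M) : ∃ n, u ∈ V ^ n := by
  induction u using TensorAlgebra.induction with
  | algebraMap r => exact ⟨0, by simp⟩
  | ι x => exact ⟨1, by simpa using Submodule.mem_sup_right (LinearMap.mem_range_self _ x)⟩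
  | mul a b ha hb =>
    obtain ⟨m, hm⟩ := ha
    obtain ⟨n, hn⟩ := hb
    exact ⟨m + n, pow_add V m n ▸ Submodule.mul_mem_mul hm hn⟩
  | add a b ha hb =>
    obtain ⟨m, hm⟩ := ha
    obtain ⟨n, hn⟩ := hb
    exact ⟨max m n, add_mem (monotone_pow_one_sup_range (le_max_left m n) hm)
      (monotone_pow_one_sup_range (le_max_right m n) hn)⟩

variable (D : M →ₗ[R] Module.End R (TensorAlgebra R M))

-- `twist D u = ρ(u) 1`, where `ρ` is the algebra map extending `x ↦ L_x + D x`.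
def twist : TensorAlgebra R M →ₗ[R] TensorAlgebra R M :=
  LinearMap.applyₗ 1 ∘ₗ (lift R (LinearMap.mul R _ ∘ₗ ι R + D)).toLinearMap

theorem twist_algebraMap (r : R) : twist D (algebraMap R _ r) = algebraMap R _ r := by
  simp [twist, Algebra.algebraMap_eq_smul_one]

theorem twist_one : twist D 1 = 1 := by
  simpa using twist_algebraMap D 1

theorem twist_ι_mul (x : M) (u : TensorAlgebra R M) :
    twist D (ι R x * u) = ι R x * twist D u + D x (twist D u) := by
  simp [twist]

variable {D}

theorem twist_eq_self_of_mem (hD : ∀ x, IsLeibniz (D x)) {u : TensorAlgebra R M} (hu : u ∈ V) :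
    twist D u = u := by
  obtain ⟨r, x, rfl⟩ := mem_one_sup_range.1 hu
  rw [map_add, twist_algebraMap, ← mul_one (ι R x), twist_ι_mul, twist_one, (hD x).map_one,
    add_zero]

theorem twist_sub_self_mem (hD : ∀ x, IsLeibniz (D x))
    (hDι : ∀ x y, D x (ι R y) ∈ LinearMap.range (ι R)) (n : ℕ) {u : TensorAlgebra R M}
    (hu : u ∈ V ^ (n + 1)) : twist D u - u ∈ V ^ n := by
  have hDV : ∀ x, ∀ a ∈ V, D x a ∈ V := by
    rintro x _ ha
    obtain ⟨r, y, rfl⟩ := mem_one_sup_range.1 ha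
    simpa [(hD x).map_algebraMap] using Submodule.mem_sup_right (hDι x y)
  induction n generalizing u with
  | zero => simp [twist_eq_self_of_mem hD (by simpa using hu)]
  | succ n ih =>
    rw [pow_succ'] at hu
    refine Submodule.mul_induction_on hu (fun a ha b hb => ?_) fun a b ha hb => ?_
    · have hJb : twist D b ∈ V ^ (n + 1) := by
        simpa using add_mem (monotone_pow_one_sup_range n.le_succ (ih hb)) hb
      obtain ⟨r, x, rfl⟩ := mem_one_sup_range.1 ha
      have hsplit : twist D ((algebraMap R _ r + ι R x) * b) - (algebraMap R _ r + ι R x) * b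
          = (algebraMap R _ r + ι R x) * (twist D b - b) + D x (twist D b) := by
        rw [add_mul, map_add, ← Algebra.smul_def, map_smul, twist_ι_mul]
        simp only [Algebra.smul_def]
        noncomm_ring
      rw [hsplit]
      refine add_mem ?_ ((hD x).mem_pow (hDV x) _ hJb)
      rw [pow_succ']
      exact Submodule.mul_mem_mul ha (ih hb)
    · rw [map_add, add_sub_add_comm]; exact add_mem ha hb

theorem bijective_twist (hD : ∀ x, IsLeibniz (D x))
    (hDι : ∀ x y, D x (ι R y) ∈ LinearMap.range (ι R)) : Function.Bijective (twist D) :=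
  LinearMap.bijective_of_sub_self_mem (V ^ ·) exists_mem_pow _
    (fun _ hu => twist_eq_self_of_mem hD (Submodule.mem_sup_left (by simpa using hu)))
    (fun n _ hu => twist_sub_self_mem hD hDι n hu)

end TensorAlgebra

variable (k : Type) [Field k] [CharZero k] (g : Type) [LieRing g] [LieAlgebra k g]

/-- **Existence and uniqueness of `K`.** There is exactly one `k`-linear map
`K : T(g) → T(g)` with `K(1) = 1` and `K(x ⊗ u + ∇ₓ u) = x ⊗ K(u)` for all
`x ∈ g`, `u ∈ T(g)`. -/
theorem K_exists_unique
    (d : g →ₗ[k] g →ₗ[k] g)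
    (N : g → Module.End k (TensorAlgebra k g))
    (hNd : ∀ (x : g) (a b : TensorAlgebra k g), N x (a * b) = N x a * b + a * N x b)
    (hN : ∀ x y : g, N x (ι k y) = ι k (d x y))
    : ∃! K : TensorAlgebra k g →ₗ[k] TensorAlgebra k g,
      K 1 = 1 ∧ ∀ (x : g) (u : TensorAlgebra k g), K (ι k x * u + N x u) = ι k x * K u := by
  let D := (isLinearMap_of_isLeibniz d hNd hN).mk' N
  let J := LinearEquiv.ofBijective (twist D)
    (bijective_twist hNd fun x y => ⟨d x y, (hN x y).symm⟩)
  have hJ (x : g) (u : TensorAlgebra k g) : ι k x * J u + N x (J u) = J (ι k x * u) :=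
    (twist_ι_mul D x u).symm
  refine ⟨J.symm, ⟨J.symm_apply_eq.2 (twist_one D).symm, fun x v => ?_⟩, ?_⟩
  · obtain ⟨u, rfl⟩ := J.surjective v
    simp only [LinearEquiv.coe_coe, hJ, LinearEquiv.symm_apply_apply]
  · rintro K ⟨hK1, hK⟩
    have hKJ (u : TensorAlgebra k g) : K (J u) = u := by
      have h := map_eq_mul_map_one (f := K ∘ₗ J.toLinearMap) (fun x u => by simp [← hK, hJ]) u
      simpa [J, twist_one, hK1] using h
    exact LinearMap.ext fun v => by simpa using hKJ (J.symm v)
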